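/- Let X be a finite set with |X| = B ≥ 1, G a finite set, and Bad ⊆ X × G such that for every x ∈ X, |{g : Bad(x,g)}| ≤ b·|G| with 0 < b < 1. Then there exist m ≤ ⌈log B / log(1/b)⌉ + 1 elements g₁,…,g_m ∈ G such that every x ∈ X has some gᵢ with ¬Bad(x,gᵢ). -/

import Mathlib

/-!
If every `x` is bad for at most a `b`-fraction of the kernels, then by double counting some kernel
is bad for at most a `b`-fraction of any given set `S` of bundles. Choosing such a kernel greedily
and recursing on the bundles it leaves unsatisfied shrinks the unsatisfied set by a factor `b` per
step, so `n` kernels suffice as soon as `bⁿ · B < 1`, i.e. for `n = ⌈log B / log (1/b)⌉ + 1`.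
-/

open Finset

theorem exists_card_filter_le_mul_card {X G : Type*} [Fintype G] [Nonempty G]
    (Bad : X → G → Prop) [∀ x g, Decidable (Bad x g)] {b : ℝ} {S : Finset X}
    (hbad : ∀ x ∈ S, (#{g | Bad x g} : ℝ) ≤ b * Fintype.card G) :
    ∃ g : G, (#{x ∈ S | Bad x g} : ℝ) ≤ b * #S := by
  have hsum : ∑ g : G, (#{x ∈ S | Bad x g} : ℝ) ≤ ∑ _g : G, b * #S :=
    calc ∑ g : G, (#{x ∈ S | Bad x g} : ℝ)
        = ∑ x ∈ S, (#{g | Bad x g} : ℝ) := by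
          exact_mod_cast (sum_card_bipartiteAbove_eq_sum_card_bipartiteBelow Bad).symm
      _ ≤ ∑ _x ∈ S, b * Fintype.card G := sum_le_sum hbad
      _ = ∑ _g : G, b * #S := by simp only [sum_const, card_univ, nsmul_eq_mul]; ring
  obtain ⟨g, -, hg⟩ := exists_le_of_sum_le univ_nonempty hsum
  exact ⟨g, hg⟩

theorem exists_fin_cover_of_pow_mul_card_lt_one {X G : Type*} [Fintype G] [Nonempty G]
    (Bad : X → G → Prop) [∀ x g, Decidable (Bad x g)] {b : ℝ} (hb : 0 ≤ b)
    (hbad : ∀ x, (#{g | Bad x g} : ℝ) ≤ b * Fintype.card G) :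
    ∀ (n : ℕ) (S : Finset X), b ^ n * #S < 1 →
      ∃ gs : Fin n → G, ∀ x ∈ S, ∃ i, ¬ Bad x (gs i)
  | 0, S, hS => by
    have hS_empty : S = ∅ := by
      rw [pow_zero, one_mul] at hS
      exact card_eq_zero.mp (Nat.lt_one_iff.mp (by exact_mod_cast hS))
    exact ⟨Fin.elim0, by simp [hS_empty]⟩
  | n + 1, S, hS => by
    obtain ⟨g, hg⟩ := exists_card_filter_le_mul_card Bad fun x _ => hbad x
    have hrest : b ^ n * #{x ∈ S | Bad x g} < 1 :=
      calc b ^ n * #{x ∈ S | Bad x g} ≤ b ^ n * (b * #S) := by gcongr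
        _ = b ^ (n + 1) * #S := by ring
        _ < 1 := hS
    obtain ⟨gs, hgs⟩ := exists_fin_cover_of_pow_mul_card_lt_one Bad hb hbad n _ hrest
    refine ⟨Fin.cons g gs, fun x hx => ?_⟩
    by_cases hxg : Bad x g
    · obtain ⟨i, hi⟩ := hgs x (mem_filter.mpr ⟨hx, hxg⟩)
      exact ⟨i.succ, by simpa using hi⟩
    · exact ⟨0, by simpa using hxg⟩

theorem lt_pow_ceil_log_div_log_add_one {c : ℝ} (hc : 1 < c) (x : ℝ) :
    x < c ^ (⌈Real.log x / Real.log c⌉₊ + 1) := by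
  rcases le_or_gt x 0 with hx | hx
  · exact hx.trans_lt (by positivity)
  have hlogb : Real.logb c x < (⌈Real.log x / Real.log c⌉₊ + 1 : ℕ) := by
    push_cast
    exact (Nat.le_ceil _).trans_lt (lt_add_one _)
  calc x = c ^ Real.logb c x := (Real.rpow_logb (by positivity) hc.ne' hx).symm
    _ < c ^ ((⌈Real.log x / Real.log c⌉₊ + 1 : ℕ) : ℝ) := Real.rpow_lt_rpow_of_exponent_lt hc hlogb
    _ = c ^ (⌈Real.log x / Real.log c⌉₊ + 1) := Real.rpow_natCast _ _

theorem stmt4_general {X G : Type*} [Fintype X] [Fintype G] [Nonempty G]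
    (Bad : X → G → Prop) [∀ x g, Decidable (Bad x g)]
    (B : ℕ) (hB : B = Fintype.card X)
    (b : ℝ) (hb0 : 0 < b) (hb1 : b < 1)
    (hbad : ∀ x : X,
      ((univ.filter fun g : G => Bad x g).card : ℝ) ≤ b * (Fintype.card G : ℝ)) :
    ∃ (m : ℕ) (gs : Fin m → G),
      m ≤ ⌈Real.log B / Real.log (1 / b)⌉₊ + 1 ∧
      ∀ x : X, ∃ i : Fin m, ¬ Bad x (gs i) := by
  set n := ⌈Real.log B / Real.log (1 / b)⌉₊ + 1
  have hB_lt : (B : ℝ) < (1 / b) ^ n :=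
    lt_pow_ceil_log_div_log_add_one ((one_lt_div hb0).mpr hb1) B
  have hsmall : b ^ n * #(univ : Finset X) < 1 := by
    rw [card_univ, ← hB, mul_comm, ← lt_div_iff₀ (by positivity)]
    simpa [one_div_pow] using hB_lt
  obtain ⟨gs, hgs⟩ := exists_fin_cover_of_pow_mul_card_lt_one Bad hb0.le hbad n univ hsmall
  exact ⟨n, gs, le_rfl, fun x => hgs x (mem_univ x)⟩

/-- Greedy hitting-set theorem: if `X` is a finite set with `|X| = B ≥ 1`, `G` a
finite nonempty set, and for every `x ∈ X` at most `b·|G|` kernels `g` satisfy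
`Bad x g` (with `0 < b < 1`), then there are `m ≤ ⌈log B / log (1/b)⌉ + 1`
kernels `g₁, …, g_m` such that every `x` has some `gᵢ` with `¬ Bad x gᵢ`. -/
theorem stmt4 {X G : Type*} [Fintype X] [Fintype G] [Nonempty G]
    (Bad : X → G → Prop) [∀ x g, Decidable (Bad x g)]
    (B : ℕ) (hB : B = Fintype.card X) (hB1 : 1 ≤ B)
    (b : ℝ) (hb0 : 0 < b) (hb1 : b < 1)
    (hbad : ∀ x : X,
      ((univ.filter fun g : G => Bad x g).card : ℝ) ≤ b * (Fintype.card G : ℝ)) :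
    ∃ (m : ℕ) (gs : Fin m → G),
      m ≤ ⌈Real.log B / Real.log (1 / b)⌉₊ + 1 ∧
      ∀ x : X, ∃ i : Fin m, ¬ Bad x (gs i) :=
  stmt4_general Bad B hB b hb0 hb1 hbad
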